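/- Let A be a skew left brace. Then the map r_A : A × A → A × A defined by r_A(a,b) = (λ_a(b), λ⁻¹_{λ_a(b)}((a∘b)⁻¹·a·(a∘b))) is bijective, satisfies the Yang–Baxter (braid) equation (r_A×id)(id×r_A)(r_A×id) = (id×r_A)(r_A×id)(id×r_A) on A × A × A, and is non-degenerate: writing r_A(a,b) = (σ_a(b), τ_b(a)), for each a ∈ A the map σ_a : A → A is bijective and for each b ∈ A the map τ_b : A → A is bijective. -/

import Mathlib

/-- A skew left brace structure on a group `(A, ·)`: a second group structure
`(a, b) ↦ circ a b` (with identity `circOne` and inverse `circInv`) satisfying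
`a ∘ (b · c) = (a ∘ b) · a⁻¹ · (a ∘ c)`. -/
structure SkewLeftBrace (A : Type*) [Group A] where
  circ : A → A → A
  circ_assoc : ∀ a b c : A, circ (circ a b) c = circ a (circ b c)
  circOne : A
  circOne_circ : ∀ a : A, circ circOne a = a
  circ_circOne : ∀ a : A, circ a circOne = a
  circInv : A → A
  circInv_circ : ∀ a : A, circ (circInv a) a = circOne
  circ_circInv : ∀ a : A, circ a (circInv a) = circOne
  circ_mul : ∀ a b c : A, circ a (b * c) = circ a b * a⁻¹ * circ a c

namespace SkewLeftBrace

variable {A : Type*} [Group A]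

/-- The map `λ_a : b ↦ a⁻¹ · (a ∘ b)`. -/
def lam (S : SkewLeftBrace A) (a b : A) : A := a⁻¹ * S.circ a b

/-- The inverse `λ⁻¹_a` of the bijective map `λ_a`. -/
noncomputable def lamInv (S : SkewLeftBrace A) (a : A) : A → A :=
  Function.invFun (S.lam a)

/-- The canonical solution `r_A (a, b) = (λ_a b, λ⁻¹_{λ_a b} ((a ∘ b)⁻¹ · a · (a ∘ b)))`
associated with a skew left brace. -/
noncomputable def rmap (S : SkewLeftBrace A) : A × A → A × A :=
  fun p => (S.lam p.1 p.2,
    S.lamInv (S.lam p.1 p.2) ((S.circ p.1 p.2)⁻¹ * p.1 * S.circ p.1 p.2))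

end SkewLeftBrace


/-!
The change of variables `(a, b) ↦ (a, a ∘ b)` turns `r_A` into the shear `(x, y) ↦ (x⁻¹ y, y)` of the group `(A, ·)`, because the second component `τ` of
`r_A (a, b)` is characterised by `λ_a(b) ∘ τ = a ∘ b`. Likewise `(a, b, c) ↦ (a, a ∘ b, a ∘ b ∘ c)`
turns `r_A × id` and `id × r_A` into the maps `(x, y, z) ↦ (x⁻¹ y, y, z)` and
`(x, y, z) ↦ (x, x y⁻¹ z, z)`, which satisfy the braid relation by a computation in `(A, ·)`.
For non-degeneracy, `σ_a = λ_a`, and the `∘`-inverse of `τ_b(a)` is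
`(a ∘ b)^{-∘} · (b^{-∘})⁻¹`, a composite of bijections of `a`.
-/

namespace SkewLeftBrace

variable {A : Type*} [Group A] (S : SkewLeftBrace A)

lemma circInv_circ_circ (a x : A) : S.circ (S.circInv a) (S.circ a x) = x := by
  rw [← S.circ_assoc, S.circInv_circ, S.circOne_circ]

lemma circ_circInv_circ (a x : A) : S.circ a (S.circ (S.circInv a) x) = x := by
  rw [← S.circ_assoc, S.circ_circInv, S.circOne_circ]

lemma circ_one_right (a : A) : S.circ a 1 = a := by
  have h := S.circ_mul a 1 1
  rw [mul_one, mul_assoc, left_eq_mul] at h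
  exact (inv_mul_eq_one.mp h).symm

lemma circOne_eq_one : S.circOne = 1 :=
  (S.circ_one_right _).symm.trans (S.circOne_circ 1)

lemma circ_one_left (a : A) : S.circ 1 a = a := by
  rw [← S.circOne_eq_one, S.circOne_circ]

lemma circ_circInv_eq_one (a : A) : S.circ a (S.circInv a) = 1 := by
  rw [S.circ_circInv, S.circOne_eq_one]

lemma circInv_circ_eq_one (a : A) : S.circ (S.circInv a) a = 1 := by
  rw [S.circInv_circ, S.circOne_eq_one]

lemma circInv_eq_of_circ_eq_one {a b : A} (h : S.circ a b = 1) : S.circInv a = b := by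
  rw [← S.circ_one_right (S.circInv a), ← h, S.circInv_circ_circ]

lemma circInv_circInv (a : A) : S.circInv (S.circInv a) = a :=
  S.circInv_eq_of_circ_eq_one (S.circInv_circ_eq_one a)

lemma circInv_circ_rev (a b : A) :
    S.circInv (S.circ a b) = S.circ (S.circInv b) (S.circInv a) := by
  apply S.circInv_eq_of_circ_eq_one
  rw [S.circ_assoc, ← S.circ_assoc b, S.circ_circInv_eq_one, S.circ_one_left,
    S.circ_circInv_eq_one]

lemma circInv_bijective : Function.Bijective S.circInv :=
  Function.Involutive.bijective S.circInv_circInv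

lemma circ_left_bijective (b : A) : Function.Bijective fun a => S.circ a b :=
  Function.bijective_iff_has_inverse.mpr
    ⟨fun x => S.circ x (S.circInv b),
      fun a => by simp only [S.circ_assoc, S.circ_circInv_eq_one, S.circ_one_right],
      fun x => by simp only [S.circ_assoc, S.circInv_circ_eq_one, S.circ_one_right]⟩

lemma circ_inv_right (a b : A) : S.circ a b⁻¹ = a * (S.circ a b)⁻¹ * a := by
  have h := S.circ_mul a b b⁻¹
  rw [mul_inv_cancel, S.circ_one_right] at h
  calc S.circ a b⁻¹ = (S.circ a b * a⁻¹)⁻¹ * (S.circ a b * a⁻¹ * S.circ a b⁻¹) := by group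
    _ = a * (S.circ a b)⁻¹ * a := by rw [← h]; group

lemma circ_eq_mul_lam (a b : A) : S.circ a b = a * S.lam a b := by
  rw [lam, mul_inv_cancel_left]

lemma lam_mul (a x y : A) : S.lam a (x * y) = S.lam a x * S.lam a y := by
  simp only [lam, S.circ_mul]
  group

lemma lam_one (a : A) : S.lam a 1 = 1 := by
  rw [lam, S.circ_one_right, inv_mul_cancel]

lemma lam_inv (a x : A) : S.lam a x⁻¹ = (S.lam a x)⁻¹ :=
  eq_inv_of_mul_eq_one_left (by rw [← S.lam_mul, inv_mul_cancel, S.lam_one])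

lemma lam_one_left (x : A) : S.lam 1 x = x := by
  rw [lam, S.circ_one_left, inv_one, one_mul]

lemma lam_circInv_self (a : A) : S.lam a (S.circInv a) = a⁻¹ := by
  rw [lam, S.circ_circInv_eq_one, mul_one]

lemma circ_lam (a b c : A) :
    S.circ a (S.lam b c) = a * (S.circ a b)⁻¹ * S.circ (S.circ a b) c := by
  rw [lam, S.circ_mul, S.circ_inv_right, S.circ_assoc]
  group

lemma lam_circ (a b c : A) : S.lam (S.circ a b) c = S.lam a (S.lam b c) := by
  have h := S.circ_lam a b c
  simp only [lam] at h ⊢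
  rw [h]
  group

lemma lam_bijective (a : A) : Function.Bijective (S.lam a) :=
  Function.bijective_iff_has_inverse.mpr
    ⟨fun y => S.circ (S.circInv a) (a * y),
      fun x => by simp only [← S.circ_eq_mul_lam, S.circInv_circ_circ],
      fun y => by simp only [lam, S.circ_circInv_circ, inv_mul_cancel_left]⟩

lemma rmap_fst (a b : A) : (S.rmap (a, b)).1 = S.lam a b := rfl

lemma rmap_snd (a b : A) :
    (S.rmap (a, b)).2 = S.circ (S.circInv (S.lam a b)) (S.circ a b) := by
  have h : S.lam (S.lam a b) (S.circ (S.circInv (S.lam a b)) (S.circ a b))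
      = (S.circ a b)⁻¹ * a * S.circ a b := by
    rw [lam, S.circ_circInv_circ, lam]
    group
  change S.lamInv _ _ = _
  rw [← h]
  exact Function.leftInverse_invFun (S.lam_bijective _).injective _

lemma circ_rmap (a b : A) : S.circ (S.rmap (a, b)).1 (S.rmap (a, b)).2 = S.circ a b := by
  rw [rmap_fst, rmap_snd, S.circ_circInv_circ]

lemma circInv_rmap_snd (a b : A) :
    S.circInv (S.rmap (a, b)).2 = S.circInv (S.circ a b) * (S.circInv b)⁻¹ := by
  have hlam : S.lam (S.circ a b) (S.circInv b)⁻¹ = S.lam a b := by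
    rw [S.lam_inv, S.lam_circ, S.lam_circInv_self, S.lam_inv, inv_inv]
  have hlam' : S.lam (S.circInv (S.circ a b)) (S.lam a b) = (S.circInv b)⁻¹ := by
    rw [← hlam, ← S.lam_circ, S.circInv_circ_eq_one, S.lam_one_left]
  rw [rmap_snd, S.circInv_circ_rev, S.circInv_circInv, S.circ_eq_mul_lam, hlam']

lemma rmap_snd_bijective (b : A) : Function.Bijective fun a => (S.rmap (a, b)).2 := by
  have h : (fun a => (S.rmap (a, b)).2)
      = S.circInv ∘ (· * (S.circInv b)⁻¹) ∘ S.circInv ∘ (fun a => S.circ a b) := by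
    funext a
    simp only [Function.comp_apply, ← S.circInv_rmap_snd, S.circInv_circInv]
  rw [h]
  exact S.circInv_bijective.comp ((Equiv.mulRight _).bijective.comp
    (S.circInv_bijective.comp (S.circ_left_bijective b)))

def circPair : A × A ≃ A × A where
  toFun p := (p.1, S.circ p.1 p.2)
  invFun p := (p.1, S.circ (S.circInv p.1) p.2)
  left_inv p := by simp only [S.circInv_circ_circ]
  right_inv p := by simp only [S.circ_circInv_circ]

def shear : A × A ≃ A × A where
  toFun p := (p.1⁻¹ * p.2, p.2)
  invFun p := (p.2 * p.1⁻¹, p.2)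
  left_inv p := by simp only [mul_inv_rev, inv_inv, mul_inv_cancel_left]
  right_inv p := by simp only [mul_inv_rev, inv_inv, inv_mul_cancel_right]

lemma circPair_rmap (p : A × A) : S.circPair (S.rmap p) = shear (S.circPair p) := by
  obtain ⟨a, b⟩ := p
  exact Prod.ext (S.rmap_fst a b) (S.circ_rmap a b)

lemma rmap_bijective : Function.Bijective S.rmap := by
  have h : S.rmap = S.circPair.symm ∘ shear ∘ S.circPair := by
    funext p
    simp only [Function.comp_apply, ← S.circPair_rmap, Equiv.symm_apply_apply]
  rw [h]
  exact S.circPair.symm.bijective.comp (shear.bijective.comp S.circPair.bijective)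

noncomputable def rmap₁₂ (p : A × A × A) : A × A × A :=
  ((S.rmap (p.1, p.2.1)).1, (S.rmap (p.1, p.2.1)).2, p.2.2)

noncomputable def rmap₂₃ (p : A × A × A) : A × A × A := (p.1, S.rmap p.2)

def circTriple (p : A × A × A) : A × A × A :=
  (p.1, S.circ p.1 p.2.1, S.circ (S.circ p.1 p.2.1) p.2.2)

lemma circTriple_injective : Function.Injective S.circTriple := by
  refine Function.LeftInverse.injective (g := fun q : A × A × A =>
    (q.1, S.circ (S.circInv q.1) q.2.1, S.circ (S.circInv q.2.1) q.2.2)) ?_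
  rintro ⟨a, b, c⟩
  simp only [circTriple, S.circInv_circ_circ]

def shear₁₂ (q : A × A × A) : A × A × A := (q.1⁻¹ * q.2.1, q.2.1, q.2.2)

def shear₂₃ (q : A × A × A) : A × A × A := (q.1, q.1 * q.2.1⁻¹ * q.2.2, q.2.2)

lemma shear₁₂_shear₂₃_shear₁₂ (q : A × A × A) :
    shear₁₂ (shear₂₃ (shear₁₂ q)) = shear₂₃ (shear₁₂ (shear₂₃ q)) := by
  obtain ⟨x, y, z⟩ := q
  simp only [shear₁₂, shear₂₃, Prod.mk.injEq]
  exact ⟨by group, by group, trivial⟩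

lemma circTriple_rmap₁₂ (p : A × A × A) :
    S.circTriple (S.rmap₁₂ p) = shear₁₂ (S.circTriple p) := by
  obtain ⟨a, b, c⟩ := p
  simp only [circTriple, rmap₁₂, shear₁₂]
  rw [S.circ_rmap, rmap_fst, lam]

lemma circTriple_rmap₂₃ (p : A × A × A) :
    S.circTriple (S.rmap₂₃ p) = shear₂₃ (S.circTriple p) := by
  obtain ⟨a, b, c⟩ := p
  simp only [circTriple, rmap₂₃, shear₂₃]
  rw [S.circ_assoc, S.circ_rmap, rmap_fst, S.circ_lam, S.circ_assoc]

lemma rmap₁₂_rmap₂₃_rmap₁₂ (p : A × A × A) :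
    S.rmap₁₂ (S.rmap₂₃ (S.rmap₁₂ p)) = S.rmap₂₃ (S.rmap₁₂ (S.rmap₂₃ p)) := by
  apply S.circTriple_injective
  simp only [circTriple_rmap₁₂, circTriple_rmap₂₃, shear₁₂_shear₂₃_shear₁₂]

end SkewLeftBrace

/-- The map `r_A` associated with a skew left brace `A` is a bijective non-degenerate
solution of the Yang–Baxter (braid) equation. -/
theorem skewLeftBrace_rmap_solution {A : Type*} [Group A] (S : SkewLeftBrace A) :
    Function.Bijective S.rmap ∧
    ((fun p : A × A × A => ((S.rmap (p.1, p.2.1)).1, (S.rmap (p.1, p.2.1)).2, p.2.2)) ∘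
        (fun p : A × A × A => (p.1, S.rmap p.2)) ∘
        (fun p : A × A × A => ((S.rmap (p.1, p.2.1)).1, (S.rmap (p.1, p.2.1)).2, p.2.2))
      = (fun p : A × A × A => (p.1, S.rmap p.2)) ∘
        (fun p : A × A × A => ((S.rmap (p.1, p.2.1)).1, (S.rmap (p.1, p.2.1)).2, p.2.2)) ∘
        (fun p : A × A × A => (p.1, S.rmap p.2))) ∧
    (∀ a : A, Function.Bijective (fun b : A => (S.rmap (a, b)).1)) ∧
    (∀ b : A, Function.Bijective (fun a : A => (S.rmap (a, b)).2)) :=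
  ⟨S.rmap_bijective, funext S.rmap₁₂_rmap₂₃_rmap₁₂, S.lam_bijective, S.rmap_snd_bijective⟩
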